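/- arXiv:1612.05124 — 3 statements merged into one kernel-verified Lean document; each statement's English description precedes it below -/
import Mathlib

section
/- Let X be a standard normal random variable, θ ∈ ℝ, and ε > 0. Then P(|X − θ| ≤ ε) ≥ (e^{−θ²}/√2) · P(|X| ≤ √2 ε) ≥ √(2/π) · exp(log ε − ε² − θ²). -/
open Real MeasureTheory

/-- P(|X − θ| ≤ ε) for a standard normal X, written as an integral of the
Gaussian density over [θ−ε, θ+ε]. -/
noncomputable def stdNormalProb (a b : ℝ) : ℝ :=
  (1 / Real.sqrt (2 * Real.pi)) * ∫ x in a..b, Real.exp (-x ^ 2 / 2)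

/-!
The substitution `x = θ + u` together with `(θ + u)² / 2 ≤ θ² + u²` bounds the Gaussian mass
of `[θ - ε, θ + ε]` below by `exp (-θ²) ∫_{-ε}^{ε} exp (-u²) du`, and the substitution
`x = √2 u` identifies that integral with `√π` times the standard normal mass of
`[-√2 ε, √2 ε]`. The second inequality bounds `exp (-u²)` below by its minimum `exp (-ε²)`
on `[-ε, ε]`.
-/

lemma stdNormalProb_sqrt_two_mul (a b : ℝ) :
    stdNormalProb (√2 * a) (√2 * b) = (1 / √π) * ∫ u in a..b, exp (-u ^ 2) := by
  have hsq : ∀ u : ℝ, exp (-(√2 * u) ^ 2 / 2) = exp (-u ^ 2) := fun u => by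
    rw [mul_pow, sq_sqrt zero_le_two]
    ring_nf
  have hsubst := intervalIntegral.integral_comp_mul_left (a := a) (b := b)
    (fun x => exp (-x ^ 2 / 2)) (c := √2) (by positivity)
  simp only [hsq, smul_eq_mul] at hsubst
  rw [stdNormalProb, hsubst, sqrt_mul zero_le_two]
  field_simp

lemma exp_neg_sq_mul_exp_neg_sq_le (θ u : ℝ) :
    exp (-θ ^ 2) * exp (-u ^ 2) ≤ exp (-(θ + u) ^ 2 / 2) := by
  rw [← exp_add, exp_le_exp]
  nlinarith [sq_nonneg (θ - u)]

lemma exp_neg_sq_mul_integral_le_integral_add {a b : ℝ} (hab : a ≤ b) (θ : ℝ) :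
    exp (-θ ^ 2) * ∫ u in a..b, exp (-u ^ 2) ≤
      ∫ x in (θ + a)..(θ + b), exp (-x ^ 2 / 2) := by
  rw [← intervalIntegral.integral_const_mul,
    ← intervalIntegral.integral_comp_add_left (fun x => exp (-x ^ 2 / 2))]
  exact intervalIntegral.integral_mono_on hab
    (Continuous.intervalIntegrable (by fun_prop) _ _)
    (Continuous.intervalIntegrable (by fun_prop) _ _)
    fun u _ => exp_neg_sq_mul_exp_neg_sq_le θ u

lemma two_mul_mul_exp_neg_sq_le_integral {ε : ℝ} (hε : 0 ≤ ε) :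
    2 * ε * exp (-ε ^ 2) ≤ ∫ u in (-ε)..ε, exp (-u ^ 2) := by
  have hmin : ∫ _ in (-ε)..ε, exp (-ε ^ 2) ≤ ∫ u in (-ε)..ε, exp (-u ^ 2) :=
    intervalIntegral.integral_mono_on (by linarith) intervalIntegrable_const
      (Continuous.intervalIntegrable (by fun_prop) _ _)
      fun u hu => exp_le_exp.2 (neg_le_neg (sq_le_sq' hu.1 hu.2))
  rw [intervalIntegral.integral_const, smul_eq_mul] at hmin
  linarith

theorem normal_ball_lower_bound (θ ε : ℝ) (hε : 0 < ε) :
    (Real.exp (-θ ^ 2) / Real.sqrt 2) *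
        stdNormalProb (-(Real.sqrt 2 * ε)) (Real.sqrt 2 * ε) ≤
      stdNormalProb (θ - ε) (θ + ε) ∧
    Real.sqrt (2 / Real.pi) * Real.exp (Real.log ε - ε ^ 2 - θ ^ 2) ≤
      (Real.exp (-θ ^ 2) / Real.sqrt 2) *
        stdNormalProb (-(Real.sqrt 2 * ε)) (Real.sqrt 2 * ε) := by
  set I := ∫ u in (-ε)..ε, exp (-u ^ 2)
  have hball : stdNormalProb (-(√2 * ε)) (√2 * ε) = (1 / √π) * I := by
    rw [← mul_neg, stdNormalProb_sqrt_two_mul]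
  have hshift := exp_neg_sq_mul_integral_le_integral_add (neg_le_self hε.le) θ
  have hI := two_mul_mul_exp_neg_sq_le_integral hε.le
  have hexp : exp (log ε - ε ^ 2 - θ ^ 2) = ε * exp (-ε ^ 2) * exp (-θ ^ 2) := by
    rw [sub_sub, sub_eq_add_neg, exp_add, exp_log hε, neg_add, exp_add]
    ring
  rw [hball]
  constructor
  · rw [stdNormalProb, sub_eq_add_neg, sqrt_mul zero_le_two]
    calc exp (-θ ^ 2) / √2 * (1 / √π * I) = 1 / (√2 * √π) * (exp (-θ ^ 2) * I) := by
          ring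
      _ ≤ _ := by gcongr
  · rw [hexp, sqrt_div zero_le_two]
    calc √2 / √π * (ε * exp (-ε ^ 2) * exp (-θ ^ 2))
        = exp (-θ ^ 2) / √2 * (1 / √π * (2 * ε * exp (-ε ^ 2))) := by
          field_simp
          rw [sq_sqrt zero_le_two]
      _ ≤ _ := by gcongr
end

section
/- For p ≥ 2, the function a ↦ (1−a)^{p/2−1} (1−a³)^{−p/2} (1−a^{p+1}) on [0,1) attains its maximum at a = 0, with maximum value 1. -/
open Real

theorem affine_ratio_max_at_zero (p : ℝ) (hp : 2 ≤ p) :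
    ((1 - (0 : ℝ)) ^ (p / 2 - 1) * (1 - (0 : ℝ) ^ 3) ^ (-(p / 2)) * (1 - (0 : ℝ) ^ (p + 1)) = 1) ∧
    ∀ a ∈ Set.Ico (0 : ℝ) 1,
      (1 - a) ^ (p / 2 - 1) * (1 - a ^ 3) ^ (-(p / 2)) * (1 - a ^ (p + 1)) ≤ 1 := by
  have hp1 : (0:ℝ) < p + 1 := by linarith
  constructor
  · simp [Real.zero_rpow hp1.ne', Real.one_rpow]
  · rintro a ⟨ha0, ha1⟩
    have h1a : (0:ℝ) < 1 - a := by linarith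
    have hsum : (0:ℝ) < 1 + a + a ^ 2 := by positivity
    -- key inequality: 1 - a^(p+1) ≤ (1-a) * (1+a+a²)^(p/2)
    have hBern : 1 + (p/2) * (a + a^2) ≤ (1 + (a + a^2)) ^ (p/2) :=
      one_add_mul_self_le_rpow_one_add (by nlinarith) (by linarith)
    -- Bernoulli on a² : a^p ≥ 1 - (p/2)*(1 - a²)
    have hap : 1 - (p/2) * (1 - a^2) ≤ a ^ p := by
      have h := one_add_mul_self_le_rpow_one_add (s := a^2 - 1) (by nlinarith) (p := p/2) (by linarith)
      have heq : (1 + (a^2 - 1)) ^ (p/2) = a ^ p := by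
        have h2 : (1 + (a^2 - 1)) = a ^ (2:ℕ) := by ring
        rw [h2, ← Real.rpow_natCast a 2, ← Real.rpow_mul ha0]
        congr 1
        push_cast
        ring
      rw [heq] at h
      linarith
    have key : 1 - a ^ (p + 1) ≤ (1 - a) * (1 + a + a ^ 2) ^ (p/2) := by
      have hsplit : a ^ (p + 1) = a ^ p * a := by
        rcases eq_or_lt_of_le ha0 with h | h
        · rw [← h]
          rw [Real.zero_rpow hp1.ne', Real.zero_rpow (by linarith)]
          ring
        · rw [Real.rpow_add_one h.ne']
      have h2 : 1 - a ^ (p+1) ≤ (1 - a) * (1 + (p/2) * (a + a^2)) := by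
        rw [hsplit]
        nlinarith [mul_le_mul_of_nonneg_left hap ha0]
      calc 1 - a ^ (p+1) ≤ (1 - a) * (1 + (p/2) * (a + a^2)) := h2
        _ ≤ (1 - a) * (1 + (a + a^2)) ^ (p/2) := by
            apply mul_le_mul_of_nonneg_left hBern h1a.le
        _ = (1 - a) * (1 + a + a ^ 2) ^ (p/2) := by ring_nf
    -- rewrite the expression
    have hfac : 1 - a ^ 3 = (1 - a) * (1 + a + a ^ 2) := by ring
    have hexpr : (1 - a) ^ (p / 2 - 1) * (1 - a ^ 3) ^ (-(p / 2)) * (1 - a ^ (p + 1))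
        = (1 - a ^ (p + 1)) / ((1 - a) * (1 + a + a ^ 2) ^ (p/2)) := by
      rw [hfac, Real.mul_rpow h1a.le hsum.le]
      rw [show (p/2 - 1 : ℝ) = -1 + (p/2) by ring, Real.rpow_add h1a,
        Real.rpow_neg h1a.le, Real.rpow_neg hsum.le, Real.rpow_one,
        Real.rpow_neg h1a.le]
      field_simp
    rw [hexpr, div_le_one (by positivity)]
    exact key
end

section
/- Let n ∈ ℕ, let Λ̃ be the n×n diagonal matrix with diagonal entries Λ̃_{ii} = 2^{−ℓ(i)} for a function ℓ: {1,…,n} → ℕ with Σᵢ 2^{−2ℓ(i)} ≤ 1, and let A be a symmetric n×n matrix satisfying c₁2^{−ℓ(i)} ≤ A_{ii} ≤ c₂2^{−ℓ(i)} and |A_{ii'}| ≤ c₃ 2^{−1.5(ℓ(i)+ℓ(i'))} for i ≠ i', where 0 < c₁ < c₂ and 0 < c₃ < c₁. Then for all x ∈ ℝⁿ: (c₁ − c₃)·xᵀΛ̃x ≤ xᵀAx ≤ 2c₂·xᵀΛ̃x. -/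
/-! The matrix splits as its diagonal plus an off-diagonal remainder `B`. The diagonal part is
comparable to `S = ∑ xᵢ² dᵢ` with `dᵢ = 2^{-ℓ(i)}`. For the remainder, `|Bᵢⱼ| ≤ c₃ wᵢ wⱼ` with
`wᵢ = dᵢ^{3/2}` gives `|xᵀBx| ≤ c₃ (∑ |xᵢ| wᵢ)²`, and Cauchy–Schwarz with
`|xᵢ| wᵢ = (|xᵢ| dᵢ^{1/2}) · dᵢ` bounds this by `c₃ S ∑ dᵢ² ≤ c₃ S`. -/

open Real Matrix Finset

section AlmostDiagonal

variable {ι : Type*} [Fintype ι]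

theorem dotProduct_diagonal_mulVec [DecidableEq ι] (v x : ι → ℝ) :
    x ⬝ᵥ diagonal v *ᵥ x = ∑ i, x i ^ 2 * v i := by
  simp only [dotProduct, mulVec_diagonal]
  exact sum_congr rfl fun i _ => by ring

theorem abs_dotProduct_mulVec_le_of_abs_le_mul {B : Matrix ι ι ℝ} {c : ℝ} {w : ι → ℝ}
    (hB : ∀ i j, |B i j| ≤ c * (w i * w j)) (x : ι → ℝ) :
    |x ⬝ᵥ B *ᵥ x| ≤ c * (∑ i, |x i| * w i) ^ 2 := by
  calc |x ⬝ᵥ B *ᵥ x| = |∑ i, ∑ j, x i * B i j * x j| := by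
        simp only [dotProduct, mulVec, mul_sum, mul_assoc]
    _ ≤ ∑ i, ∑ j, |x i| * |B i j| * |x j| := by
        refine (abs_sum_le_sum_abs _ _).trans (sum_le_sum fun i _ => ?_)
        refine (abs_sum_le_sum_abs _ _).trans_eq (sum_congr rfl fun j _ => ?_)
        rw [abs_mul, abs_mul]
    _ ≤ ∑ i, ∑ j, |x i| * (c * (w i * w j)) * |x j| := by
        gcongr with i _ j _
        exact hB i j
    _ = c * (∑ i, |x i| * w i) ^ 2 := by
        rw [sq, sum_mul_sum, mul_sum]
        exact sum_congr rfl fun i _ => by rw [mul_sum]; exact sum_congr rfl fun j _ => by ring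

theorem sq_sum_abs_mul_le_of_sq_le_cube {d w : ι → ℝ} (hd : ∀ i, 0 ≤ d i)
    (hwd : ∀ i, w i ^ 2 ≤ d i ^ 3) (x : ι → ℝ) :
    (∑ i, |x i| * w i) ^ 2 ≤ (∑ i, x i ^ 2 * d i) * ∑ i, d i ^ 2 :=
  sum_sq_le_sum_mul_sum_of_sq_le_mul _ (fun i _ => mul_nonneg (sq_nonneg _) (hd i))
    (fun i _ => sq_nonneg _) fun i _ =>
      calc (|x i| * w i) ^ 2 = x i ^ 2 * w i ^ 2 := by rw [mul_pow, sq_abs]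
        _ ≤ x i ^ 2 * d i ^ 3 := by gcongr; exact hwd i
        _ = x i ^ 2 * d i * d i ^ 2 := by ring

theorem dotProduct_mulVec_bounds_of_almost_diagonal (A : Matrix ι ι ℝ) {d w : ι → ℝ}
    (hd : ∀ i, 0 ≤ d i) (hwd : ∀ i, w i ^ 2 ≤ d i ^ 3) (hd_sum : ∑ i, d i ^ 2 ≤ 1)
    {c₁ c₂ c₃ : ℝ} (hc₃ : 0 ≤ c₃) (hdiag : ∀ i, c₁ * d i ≤ A i i ∧ A i i ≤ c₂ * d i)
    (hoff : ∀ i j, i ≠ j → |A i j| ≤ c₃ * (w i * w j)) (x : ι → ℝ) :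
    (c₁ - c₃) * ∑ i, x i ^ 2 * d i ≤ x ⬝ᵥ A *ᵥ x ∧
      x ⬝ᵥ A *ᵥ x ≤ (c₂ + c₃) * ∑ i, x i ^ 2 * d i := by
  classical
  set S := ∑ i, x i ^ 2 * d i
  have hS : 0 ≤ S := sum_nonneg fun i _ => mul_nonneg (sq_nonneg _) (hd i)
  set B := A - diagonal A.diag
  have hsplit : x ⬝ᵥ A *ᵥ x = ∑ i, x i ^ 2 * A i i + x ⬝ᵥ B *ᵥ x := by
    conv_lhs => rw [← add_sub_cancel (diagonal A.diag) A]
    rw [add_mulVec, dotProduct_add, dotProduct_diagonal_mulVec]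
    rfl
  have hdiag_lower : c₁ * S ≤ ∑ i, x i ^ 2 * A i i := by
    rw [mul_sum]
    exact sum_le_sum fun i _ => by nlinarith [(hdiag i).1, sq_nonneg (x i)]
  have hdiag_upper : ∑ i, x i ^ 2 * A i i ≤ c₂ * S := by
    rw [mul_sum]
    exact sum_le_sum fun i _ => by nlinarith [(hdiag i).2, sq_nonneg (x i)]
  have hB : ∀ i j, |B i j| ≤ c₃ * (w i * w j) := by
    intro i j
    obtain rfl | hij := eq_or_ne i j
    · simpa [B] using mul_nonneg hc₃ (mul_self_nonneg (w i))
    · simpa [B, diagonal_apply_ne _ hij] using hoff i j hij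
  have hoff_bound : |x ⬝ᵥ B *ᵥ x| ≤ c₃ * S :=
    calc |x ⬝ᵥ B *ᵥ x| ≤ c₃ * (∑ i, |x i| * w i) ^ 2 := abs_dotProduct_mulVec_le_of_abs_le_mul hB x
      _ ≤ c₃ * (S * 1) := by
        gcongr
        exact (sq_sum_abs_mul_le_of_sq_le_cube hd hwd x).trans (by gcongr)
      _ = c₃ * S := by rw [mul_one]
  rw [hsplit]
  constructor <;> linarith [abs_le.mp hoff_bound]

end AlmostDiagonal

theorem almost_diagonal_quadratic_form_equivalence_general (n : ℕ) (ℓ : Fin n → ℕ)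
    (hℓ : ∑ i, (2 : ℝ) ^ (-2 * (ℓ i : ℝ)) ≤ 1)
    (c₁ c₂ c₃ : ℝ) (hc₁₂ : c₁ < c₂) (hc₃ : 0 < c₃) (hc₃₁ : c₃ < c₁)
    (A : Matrix (Fin n) (Fin n) ℝ)
    (hdiag : ∀ i, c₁ * (2 : ℝ) ^ (-(ℓ i : ℝ)) ≤ A i i ∧ A i i ≤ c₂ * (2 : ℝ) ^ (-(ℓ i : ℝ)))
    (hoff : ∀ i i', i ≠ i' → |A i i'| ≤ c₃ * (2 : ℝ) ^ (-(1.5 : ℝ) * ((ℓ i : ℝ) + (ℓ i' : ℝ)))) :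
    ∀ x : Fin n → ℝ,
      (c₁ - c₃) * ∑ i, x i ^ 2 * (2 : ℝ) ^ (-(ℓ i : ℝ)) ≤ x ⬝ᵥ A.mulVec x ∧
      x ⬝ᵥ A.mulVec x ≤ 2 * c₂ * ∑ i, x i ^ 2 * (2 : ℝ) ^ (-(ℓ i : ℝ)) := by
  intro x
  have hd_sum : ∑ i, ((2 : ℝ) ^ (-(ℓ i : ℝ))) ^ 2 ≤ 1 := by
    convert hℓ using 2 with i
    rw [← rpow_natCast, ← rpow_mul zero_le_two]
    ring_nf
  have hw (i) : ((2 : ℝ) ^ (-(1.5 : ℝ) * ℓ i)) ^ 2 ≤ ((2 : ℝ) ^ (-(ℓ i : ℝ))) ^ 3 := by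
    rw [← rpow_natCast, ← rpow_natCast, ← rpow_mul zero_le_two, ← rpow_mul zero_le_two]
    norm_num
    ring_nf
    exact le_rfl
  have hoff' (i i') (h : i ≠ i') : |A i i'| ≤
      c₃ * ((2 : ℝ) ^ (-(1.5 : ℝ) * ℓ i) * (2 : ℝ) ^ (-(1.5 : ℝ) * ℓ i')) := by
    rw [← rpow_add zero_lt_two, ← mul_add]; exact hoff i i' h
  obtain ⟨hlower, hupper⟩ := dotProduct_mulVec_bounds_of_almost_diagonal A
    (fun i => by positivity) hw hd_sum hc₃.le hdiag hoff' x
  have hS : 0 ≤ ∑ i, x i ^ 2 * (2 : ℝ) ^ (-(ℓ i : ℝ)) := by positivity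
  exact ⟨hlower, hupper.trans (by nlinarith)⟩

theorem almost_diagonal_quadratic_form_equivalence (n : ℕ) (ℓ : Fin n → ℕ)
    (hℓ : ∑ i, (2 : ℝ) ^ (-2 * (ℓ i : ℝ)) ≤ 1)
    (c₁ c₂ c₃ : ℝ) (hc₁ : 0 < c₁) (hc₁₂ : c₁ < c₂) (hc₃ : 0 < c₃) (hc₃₁ : c₃ < c₁)
    (A : Matrix (Fin n) (Fin n) ℝ) (hA : A.IsSymm)
    (hdiag : ∀ i, c₁ * (2 : ℝ) ^ (-(ℓ i : ℝ)) ≤ A i i ∧ A i i ≤ c₂ * (2 : ℝ) ^ (-(ℓ i : ℝ)))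
    (hoff : ∀ i i', i ≠ i' → |A i i'| ≤ c₃ * (2 : ℝ) ^ (-(1.5 : ℝ) * ((ℓ i : ℝ) + (ℓ i' : ℝ)))) :
    ∀ x : Fin n → ℝ,
      (c₁ - c₃) * ∑ i, x i ^ 2 * (2 : ℝ) ^ (-(ℓ i : ℝ)) ≤ x ⬝ᵥ A.mulVec x ∧
      x ⬝ᵥ A.mulVec x ≤ 2 * c₂ * ∑ i, x i ^ 2 * (2 : ℝ) ^ (-(ℓ i : ℝ)) :=
  almost_diagonal_quadratic_form_equivalence_general n ℓ hℓ c₁ c₂ c₃ hc₁₂ hc₃ hc₃₁ A hdiag hoff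
end
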